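/- arXiv:2311.02784 — 3 statements merged into one kernel-verified Lean document; each statement's English description precedes it below -/
import Mathlib

section
/- In the free group F_2 = ⟨a,b⟩, the intersection of the subgroups H = ⟨a², b²a²b²⟩ and H' = ⟨b², a²b²a²⟩ equals ⟨a²b²a²b², b²a²b²a²⟩. -/
/-- `s` is a free basis of the group `G`: the induced map from the free group is bijective. -/
def IsFreeBasis {G : Type} [Group G] {ι : Type} (s : ι → G) : Prop :=
  Function.Bijective (FreeGroup.lift s)

/-- `s` is a free basis of the subgroup `H` of `G`. -/
def IsBasisOf {G : Type} [Group G] {ι : Type} (s : ι → G) (H : Subgroup G) : Prop :=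
  Function.Injective (FreeGroup.lift s) ∧ Subgroup.closure (Set.range s) = H

/-- `A` is a free factor of `G`: `G` is the internal free product of `A` with some subgroup `B`. -/
def IsFreeFactor {G : Type} [Group G] (A : Subgroup G) : Prop :=
  ∃ B : Subgroup G, Function.Bijective (Monoid.Coprod.lift A.subtype B.subtype)

/-- `A` is a free factor of the subgroup `H` of `G`. -/
def IsFreeFactorIn {G : Type} [Group G] (A H : Subgroup G) : Prop :=
  A ≤ H ∧ IsFreeFactor (A.subgroupOf H)

/-- The subgroup `H` is a free group of rank `r`. -/
def HasRank {G : Type} [Group G] (H : Subgroup G) (r : ℕ) : Prop :=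
  Nonempty (FreeGroup (Fin r) ≃* H)

/-- The subgroup generated by the first `i` elements of the family `b`. -/
def prefixSubgroup {G : Type} [Group G] {n : ℕ} (b : Fin n → G) (i : ℕ) : Subgroup G :=
  Subgroup.closure (b '' {j | (j : ℕ) < i})

/-- `b` is an echelon basis for the subgroup `H`: it is a basis of the ambient group and
the ranks of the intersections with the prefix subgroups grow by at most one at each step. -/
def IsEchelonBasis {G : Type} [Group G] {n : ℕ} (b : Fin n → G) (H : Subgroup G) : Prop :=
  IsFreeBasis b ∧ ∀ i : Fin n, ∃ r r' : ℕ,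
    HasRank (H ⊓ prefixSubgroup b (i : ℕ)) r' ∧
    HasRank (H ⊓ prefixSubgroup b ((i : ℕ) + 1)) r ∧ r ≤ r' + 1

/-- `H` is an echelon subgroup: the ambient group admits an ordered basis which is an
echelon basis for `H`. -/
def IsEchelon {G : Type} [Group G] (H : Subgroup G) : Prop :=
  ∃ (m : ℕ) (b : Fin m → G), IsEchelonBasis b H

/-- `B` is the free factor support of `H`: the minimal (by inclusion) free factor containing `H`. -/
def IsFFSupport {G : Type} [Group G] (H B : Subgroup G) : Prop :=
  IsFreeFactor B ∧ H ≤ B ∧ ∀ B' : Subgroup G, IsFreeFactor B' → H ≤ B' → B ≤ B'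

noncomputable def a : FreeGroup (Fin 2) := FreeGroup.of 0

noncomputable def b : FreeGroup (Fin 2) := FreeGroup.of 1

/-!
`H` and `H'` are the fundamental groups at `0` of two folded (Stallings) graphs, each a bouquet
of two cycles spelling the generators. Reading a word along a folded graph is insensitive to free
reduction, so the elements whose reduced word reads a loop at a vertex form a subgroup, and it
contains `H` (resp. `H'`). An element of `H ⊓ H'` therefore reads a loop at `(0, 0)` in the product
graph. Labelling each vertex of the product by the word along a spanning forest, every edge closes
up to one of `1`, `(a²b²a²b²)^±1`, `(b²a²b²a²)^±1`, so every loop at `(0, 0)` lies in the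
subgroup they generate.
-/

open FreeGroup

/-- `step s (x, true)` follows the `x`-edge leaving `s`, `step s (x, false)` the `x`-edge entering
`s` backwards; being a function, `step` encodes that the graph is folded. -/
structure FoldedGraph (α S : Type*) where
  step : S → α × Bool → Option S
  step_inv : ∀ s x t, step s x = some t → step t (x.1, !x.2) = some s

namespace FoldedGraph

variable {α S : Type*} (G : FoldedGraph α S)

def read (s : S) (w : List (α × Bool)) : Option S := w.foldlM G.step s

@[simp] theorem read_nil (s : S) : G.read s [] = some s := rfl

theorem read_cons_eq_some {s t : S} {x : α × Bool} {w : List (α × Bool)} :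
    G.read s (x :: w) = some t ↔ ∃ u, G.step s x = some u ∧ G.read u w = some t := by
  simp [read, List.foldlM_cons, Option.bind_eq_some_iff]

theorem read_append (s : S) (w₁ w₂ : List (α × Bool)) :
    G.read s (w₁ ++ w₂) = (G.read s w₁).bind (G.read · w₂) := by
  simp [read, List.foldlM_append]

theorem read_of_step {w₁ w₂ : List (α × Bool)} (h : Red.Step w₁ w₂) {s t : S}
    (hw : G.read s w₁ = some t) : G.read s w₂ = some t := by
  obtain @⟨w₁, w₂, x, e⟩ := h
  rw [read_append] at hw ⊢
  obtain ⟨u, hsu, hu⟩ := Option.bind_eq_some_iff.mp hw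
  obtain ⟨v, huv, hv⟩ := G.read_cons_eq_some.mp hu
  obtain ⟨u', hvu', hu'⟩ := G.read_cons_eq_some.mp hv
  have hu'u : u' = u := Option.some.inj (hvu'.symm.trans (G.step_inv u (x, e) v huv))
  rw [hsu, Option.bind_some, ← hu'u, hu']

theorem read_of_red {w₁ w₂ : List (α × Bool)} (h : Red w₁ w₂) {s t : S}
    (hw : G.read s w₁ = some t) : G.read s w₂ = some t := by
  induction h with
  | refl => exact hw
  | tail _ hstep ih => exact G.read_of_step hstep ih

theorem read_invRev {w : List (α × Bool)} {s t : S} (hw : G.read s w = some t) :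
    G.read t (invRev w) = some s := by
  induction w generalizing s with
  | nil => simpa [eq_comm] using hw
  | cons x w ih =>
    obtain ⟨u, hsu, hut⟩ := G.read_cons_eq_some.mp hw
    rw [invRev_cons, read_append, ih hut]
    simpa [invRev, read] using G.step_inv s x u hsu

theorem read_toWord_mk [DecidableEq α] {w : List (α × Bool)} {s t : S}
    (hw : G.read s w = some t) : G.read s (FreeGroup.mk w).toWord = some t := by
  rw [toWord_mk]
  exact G.read_of_red reduce.red hw

def loopSubgroup [DecidableEq α] (s : S) : Subgroup (FreeGroup α) where
  carrier := {w | G.read s w.toWord = some s}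
  one_mem' := rfl
  mul_mem' {w₁ w₂} h₁ h₂ := by
    rw [Set.mem_ofPred_eq, ← mk_toWord (x := w₁), ← mk_toWord (x := w₂), mul_mk]
    exact G.read_toWord_mk (by rw [read_append, h₁, Option.bind_some, h₂])
  inv_mem' {w} h := by
    rw [Set.mem_ofPred_eq, toWord_inv]
    exact G.read_invRev h

theorem mem_loopSubgroup [DecidableEq α] {s : S} {w : FreeGroup α} :
    w ∈ G.loopSubgroup s ↔ G.read s w.toWord = some s := Iff.rfl

section Prod

variable {S' : Type*} (G' : FoldedGraph α S')

def prod : FoldedGraph α (S × S') where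
  step p x := Option.map₂ Prod.mk (G.step p.1 x) (G'.step p.2 x)
  step_inv p x q h := by
    simp only [Option.map₂_eq_some_iff] at h ⊢
    obtain ⟨t, t', ht, ht', rfl⟩ := h
    exact ⟨p.1, p.2, G.step_inv _ _ _ ht, G'.step_inv _ _ _ ht', rfl⟩

theorem read_prod_eq_some {w : List (α × Bool)} {p q : S × S'} :
    (G.prod G').read p w = some q ↔ G.read p.1 w = some q.1 ∧ G'.read p.2 w = some q.2 := by
  induction w generalizing p with
  | nil => simp [Prod.ext_iff, eq_comm]
  | cons x w ih =>
    simp only [read_cons_eq_some, ih]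
    constructor
    · rintro ⟨u, hu, h, h'⟩
      obtain ⟨t, t', ht, ht', rfl⟩ := Option.map₂_eq_some_iff.mp hu
      exact ⟨⟨t, ht, h⟩, ⟨t', ht', h'⟩⟩
    · rintro ⟨⟨t, ht, h⟩, ⟨t', ht', h'⟩⟩
      exact ⟨(t, t'), Option.map₂_eq_some_iff.mpr ⟨t, t', ht, ht', rfl⟩, h, h'⟩

theorem loopSubgroup_prod [DecidableEq α] (s : S) (s' : S') :
    (G.prod G').loopSubgroup (s, s') = G.loopSubgroup s ⊓ G'.loopSubgroup s' := by
  ext w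
  simp [mem_loopSubgroup, read_prod_eq_some]

end Prod

theorem mul_mk_mul_inv_mem_of_read {N : Subgroup (FreeGroup α)} {g : S → FreeGroup α}
    (hg : ∀ s x t, G.step s x = some t → g s * FreeGroup.mk [x] * (g t)⁻¹ ∈ N)
    {w : List (α × Bool)} {s t : S} (hw : G.read s w = some t) :
    g s * FreeGroup.mk w * (g t)⁻¹ ∈ N := by
  induction w generalizing s with
  | nil =>
    obtain rfl : s = t := Option.some.inj hw
    simp [← one_eq_mk]
  | cons x w ih =>
    obtain ⟨u, hsu, hut⟩ := G.read_cons_eq_some.mp hw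
    have hsplit : g s * FreeGroup.mk (x :: w) * (g t)⁻¹ =
        (g s * FreeGroup.mk [x] * (g u)⁻¹) * (g u * FreeGroup.mk w * (g t)⁻¹) := by
      rw [show x :: w = [x] ++ w from rfl, ← mul_mk]
      group
    rw [hsplit]
    exact N.mul_mem (hg s x u hsu) (ih hut)

theorem loopSubgroup_le [DecidableEq α] {N : Subgroup (FreeGroup α)} {g : S → FreeGroup α}
    (hg : ∀ s x t, G.step s x = some t → g s * FreeGroup.mk [x] * (g t)⁻¹ ∈ N)
    {s : S} (hs : g s = 1) : G.loopSubgroup s ≤ N := fun w hw => by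
  simpa [hs, mk_toWord] using G.mul_mk_mul_inv_mem_of_read hg hw

/-- Edges are listed as `(source, letter, target)`. -/
def edgeStep [DecidableEq α] [DecidableEq S] (E : List (S × α × S)) : S → α × Bool → Option S
  | s, (x, true) => (E.find? fun e => e.1 = s ∧ e.2.1 = x).map (·.2.2)
  | s, (x, false) => (E.find? fun e => e.2.2 = s ∧ e.2.1 = x).map (·.1)

end FoldedGraph

/-- The cycles `0 -a→ 1 -a→ 0` and `0 -b→ 2 -b→ 3 -a→ 4 -a→ 5 -b→ 6 -b→ 0`, where letter `0` is `a`
and letter `1` is `b`. -/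
def stallingsGraphH : FoldedGraph (Fin 2) (Fin 7) where
  step := FoldedGraph.edgeStep
    [(0, 0, 1), (1, 0, 0), (0, 1, 2), (2, 1, 3), (3, 0, 4), (4, 0, 5), (5, 1, 6), (6, 1, 0)]
  step_inv := by decide

def stallingsGraphH' : FoldedGraph (Fin 2) (Fin 7) where
  step := FoldedGraph.edgeStep
    [(0, 1, 1), (1, 1, 0), (0, 0, 2), (2, 0, 3), (3, 1, 4), (4, 1, 5), (5, 0, 6), (6, 0, 0)]
  step_inv := by decide

theorem closure_le_loopSubgroup_stallingsGraphH :
    Subgroup.closure {a ^ 2, b ^ 2 * a ^ 2 * b ^ 2} ≤ stallingsGraphH.loopSubgroup 0 := by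
  simp only [Subgroup.closure_le, Set.insert_subset_iff, Set.singleton_subset_iff,
    SetLike.mem_coe, FoldedGraph.mem_loopSubgroup]
  decide +kernel

theorem closure_le_loopSubgroup_stallingsGraphH' :
    Subgroup.closure {b ^ 2, a ^ 2 * b ^ 2 * a ^ 2} ≤ stallingsGraphH'.loopSubgroup 0 := by
  simp only [Subgroup.closure_le, Set.insert_subset_iff, Set.singleton_subset_iff,
    SetLike.mem_coe, FoldedGraph.mem_loopSubgroup]
  decide +kernel

/-- Words along a breadth-first spanning forest of `stallingsGraphH.prod stallingsGraphH'`: the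
component of `(0, 0)` has 15 vertices, and all other components are trees. -/
noncomputable def pullbackLabel (p : Fin 7 × Fin 7) : FreeGroup (Fin 2) :=
  ![![1, 1, 1, a ^ 2, 1, a⁻¹ ^ 2, a⁻¹ ^ 2],
    ![a⁻¹, 1, a, a, 1, a⁻¹ ^ 3, a⁻¹],
    ![b, b, 1, 1, a ^ 2 * b, b, 1],
    ![b ^ 2, b ^ 2, 1, 1, b, a ^ 2 * b ^ 2, 1],
    ![a, 1, b ^ 2 * a, a, 1, 1, b⁻¹ ^ 2 * a⁻¹],
    ![b⁻¹ ^ 2, b⁻¹ ^ 2, a ^ 2, a⁻¹ ^ 2 * b⁻¹ ^ 2, 1, 1, a],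
    ![b⁻¹, b⁻¹, 1, b⁻¹, a⁻¹ ^ 2 * b⁻¹, b, 1]] p.1 p.2

theorem pullbackLabel_edge : ∀ p x, ∀ q ∈ (stallingsGraphH.prod stallingsGraphH').step p x,
    pullbackLabel p * FreeGroup.mk [x] * (pullbackLabel q)⁻¹ ∈
      [1, a ^ 2 * b ^ 2 * a ^ 2 * b ^ 2, b ^ 2 * a ^ 2 * b ^ 2 * a ^ 2,
        (a ^ 2 * b ^ 2 * a ^ 2 * b ^ 2)⁻¹, (b ^ 2 * a ^ 2 * b ^ 2 * a ^ 2)⁻¹] := by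
  decide +kernel

theorem pullbackLabel_edge_mem {p q : Fin 7 × Fin 7} {x : Fin 2 × Bool}
    (hq : (stallingsGraphH.prod stallingsGraphH').step p x = some q) :
    pullbackLabel p * FreeGroup.mk [x] * (pullbackLabel q)⁻¹ ∈
      Subgroup.closure {a ^ 2 * b ^ 2 * a ^ 2 * b ^ 2, b ^ 2 * a ^ 2 * b ^ 2 * a ^ 2} := by
  set N := Subgroup.closure {a ^ 2 * b ^ 2 * a ^ 2 * b ^ 2, b ^ 2 * a ^ 2 * b ^ 2 * a ^ 2}
  have hn₁ : a ^ 2 * b ^ 2 * a ^ 2 * b ^ 2 ∈ N := Subgroup.subset_closure (Set.mem_insert _ _)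
  have hn₂ : b ^ 2 * a ^ 2 * b ^ 2 * a ^ 2 ∈ N :=
    Subgroup.subset_closure (Set.mem_insert_of_mem _ rfl)
  have h := pullbackLabel_edge p x q hq
  simp only [List.mem_cons, List.not_mem_nil, or_false] at h
  rcases h with h | h | h | h | h <;> rw [h]
  exacts [N.one_mem, hn₁, hn₂, N.inv_mem hn₁, N.inv_mem hn₂]

theorem statement13 :
    Subgroup.closure {a ^ 2, b ^ 2 * a ^ 2 * b ^ 2} ⊓
      Subgroup.closure {b ^ 2, a ^ 2 * b ^ 2 * a ^ 2} =
    Subgroup.closure {a ^ 2 * b ^ 2 * a ^ 2 * b ^ 2, b ^ 2 * a ^ 2 * b ^ 2 * a ^ 2} := by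
  set H := Subgroup.closure {a ^ 2, b ^ 2 * a ^ 2 * b ^ 2}
  set H' := Subgroup.closure {b ^ 2, a ^ 2 * b ^ 2 * a ^ 2}
  apply le_antisymm
  · calc H ⊓ H' ≤ stallingsGraphH.loopSubgroup 0 ⊓ stallingsGraphH'.loopSubgroup 0 :=
          inf_le_inf closure_le_loopSubgroup_stallingsGraphH
            closure_le_loopSubgroup_stallingsGraphH'
      _ = (stallingsGraphH.prod stallingsGraphH').loopSubgroup (0, 0) :=
          (FoldedGraph.loopSubgroup_prod _ _ 0 0).symm
      _ ≤ _ := FoldedGraph.loopSubgroup_le _ (fun _ _ _ => pullbackLabel_edge_mem) rfl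
  · have ha : a ^ 2 ∈ H := Subgroup.subset_closure (Set.mem_insert _ _)
    have hbab : b ^ 2 * a ^ 2 * b ^ 2 ∈ H := Subgroup.subset_closure (Set.mem_insert_of_mem _ rfl)
    have hb : b ^ 2 ∈ H' := Subgroup.subset_closure (Set.mem_insert _ _)
    have haba : a ^ 2 * b ^ 2 * a ^ 2 ∈ H' :=
      Subgroup.subset_closure (Set.mem_insert_of_mem _ rfl)
    rw [Subgroup.closure_le, Set.insert_subset_iff, Set.singleton_subset_iff]
    refine ⟨Subgroup.mem_inf.mpr ⟨?_, H'.mul_mem haba hb⟩,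
      Subgroup.mem_inf.mpr ⟨H.mul_mem hbab ha, ?_⟩⟩
    · simpa only [mul_assoc] using H.mul_mem ha hbab
    · simpa only [mul_assoc] using H'.mul_mem hb haba
end

section
/- The subgroups H = ⟨a², b²a²b²⟩ and H' = ⟨b², a²b²a²⟩ of F_2 = ⟨a,b⟩ are both echelon, but their intersection H ∩ H' = ⟨a²b²a²b², b²a²b²a²⟩ is not echelon. In particular, the intersection of two echelon subgroups of a free group need not be echelon. -/
/-!
`H` and `H'` are echelon for the bases `(a, b)` and `(b, a)`: every element of `H` has even
exponent sums, so `H ∩ ⟨a⟩ = ⟨a²⟩`, and `H` is free on its two generators because the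
substitution `a ↦ a², b ↦ b²a²b²` creates no cancellation.

For `K = H ∩ H'`, an echelon basis `(p, q)` would give `rank K ≤ rank (K ∩ ⟨p⟩) + 1`, and
`K ∩ ⟨p⟩` is trivial: if `pⁿ ∈ K` with `p = c r c⁻¹`, `r` cyclically reduced, then `rⁿ` labels
closed paths in the Stallings graphs of `H` and of `H'`. If `r` is a power of one letter this is
impossible, since the `a`-edges of the graph of `H'` and the `b`-edges of the graph of `H` form no
cycle. Otherwise the path along `r r` changes letter at two vertices where both letter-count
parities vanish, so `r`, hence `p`, has even exponent sums; but a primitive element has nonzero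
image in `(ℤ/2)²`. So `K` would be cyclic, while it contains two non-commuting elements.
-/

namespace FreeGroup

section LabelledGraph

variable {α V : Type*} (δ : V → α × Bool → Option V)

/-- `δ v (x, true)` is the end of the `x`-edge leaving `v` and `δ v (x, false)` the start of the
`x`-edge entering `v`; `readWord δ w v` follows the path spelled by `w`, failing on a missing
edge. -/
def readWord (w : List (α × Bool)) (v : V) : Option V := w.foldlM δ v

@[simp]
theorem readWord_nil (v : V) : readWord δ [] v = some v := rfl

theorem readWord_cons_eq_some {l : α × Bool} {w : List (α × Bool)} {u v : V} :
    readWord δ (l :: w) u = some v ↔ ∃ m, δ u l = some m ∧ readWord δ w m = some v := by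
  simp [readWord, List.foldlM_cons, Option.bind_eq_some_iff]

theorem readWord_append_eq_some {w₁ w₂ : List (α × Bool)} {u v : V} :
    readWord δ (w₁ ++ w₂) u = some v ↔
      ∃ m, readWord δ w₁ u = some m ∧ readWord δ w₂ m = some v := by
  simp [readWord, List.foldlM_append, Option.bind_eq_some_iff]

def IsSymmetric : Prop := ∀ u l v, δ u l = some v → δ v (l.1, !l.2) = some u

variable {δ}

theorem IsSymmetric.readWord_invRev (hδ : IsSymmetric δ) {w : List (α × Bool)} {u v : V}
    (h : readWord δ w u = some v) : readWord δ (invRev w) v = some u := by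
  induction w generalizing u with
  | nil => simpa [invRev, eq_comm] using h
  | cons l w ih =>
    obtain ⟨m, hl, hw⟩ := (readWord_cons_eq_some δ).1 h
    rw [invRev_cons, readWord_append_eq_some]
    exact ⟨m, ih hw, by simp [invRev, readWord_cons_eq_some, hδ _ _ _ hl]⟩

theorem IsSymmetric.readWord_of_step (hδ : IsSymmetric δ) {w w' : List (α × Bool)} {u v : V}
    (hs : Red.Step w w') (h : readWord δ w u = some v) : readWord δ w' u = some v := by
  obtain ⟨L₁, L₂, x, s⟩ := hs
  simp only [readWord_append_eq_some, readWord_cons_eq_some] at h ⊢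
  obtain ⟨m, h₁, m₁, hx, m₂, hx', h₂⟩ := h
  obtain rfl : m₂ = m := Option.some_inj.1 (hx'.symm.trans (hδ _ _ _ hx))
  exact ⟨_, h₁, h₂⟩

theorem IsSymmetric.readWord_of_red (hδ : IsSymmetric δ) {w w' : List (α × Bool)} {u v : V}
    (hr : Red w w') (h : readWord δ w u = some v) : readWord δ w' u = some v := by
  induction hr with
  | refl => exact h
  | tail _ hs ih => exact hδ.readWord_of_step hs ih

theorem IsSymmetric.exists_readWord_eq_self_of_conj (hδ : IsSymmetric δ) {v₀ : V}
    {C W : List (α × Bool)} (h : readWord δ (C ++ W ++ invRev C) v₀ = some v₀) :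
    ∃ y, readWord δ W y = some y := by
  obtain ⟨z, hCW, hC'⟩ := (readWord_append_eq_some δ).1 h
  obtain ⟨y, hC, hW⟩ := (readWord_append_eq_some δ).1 hCW
  have hC'' := hδ.readWord_invRev hC'
  rw [invRev_invRev, hC] at hC''
  obtain rfl := Option.some_inj.1 hC''
  exact ⟨y, hW⟩

theorem readWord_potential {M : Type*} [Monoid M] (φ : FreeGroup α →* M) (P : V → M)
    (hP : ∀ u l v, δ u l = some v → P v = P u * φ (mk [l])) {w : List (α × Bool)} {u v : V}
    (h : readWord δ w u = some v) : P v = P u * φ (mk w) := by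
  induction w generalizing u with
  | nil => simp_all [← one_eq_mk]
  | cons l w ih =>
    obtain ⟨m, hl, hw⟩ := (readWord_cons_eq_some δ).1 h
    rw [ih hw, hP _ _ _ hl, mul_assoc, ← _root_.map_mul, mul_mk, List.singleton_append]

theorem readWord_replicate_lt {β : Type*} [Preorder β] (h : V → β) {x : α × Bool}
    (hx : ∀ u v, δ u x = some v → h u < h v) {n : ℕ} (hn : n ≠ 0) {u v : V}
    (hw : readWord δ (List.replicate n x) u = some v) : h u < h v := by
  induction n generalizing u with
  | zero => exact absurd rfl hn
  | succ n ih =>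
    obtain ⟨m, hl, hw⟩ := (readWord_cons_eq_some δ).1 hw
    rcases n with _ | n
    · obtain rfl : m = v := by simpa using hw
      exact hx _ _ hl
    · exact (hx _ _ hl).trans (ih n.succ_ne_zero hw)

theorem IsSymmetric.readWord_replicate_ne_self (hδ : IsSymmetric δ) {β : Type*} [Preorder β]
    (h : V → β) {x : α} (hx : ∀ u v, δ u (x, true) = some v → h u < h v) {n : ℕ} (hn : n ≠ 0)
    (s : Bool) (u : V) : readWord δ (List.replicate n (x, s)) u ≠ some u := by
  intro hu
  cases s
  · replace hu := hδ.readWord_invRev hu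
    simp only [invRev, List.map_replicate, List.reverse_replicate, Bool.not_false] at hu
    exact (readWord_replicate_lt h hx hn hu).false
  · exact (readWord_replicate_lt h hx hn hu).false

theorem map_mk_eq_one_of_junctions {M : Type*} [Group M] (φ : FreeGroup α →* M) (P : V → M)
    (hP : ∀ u l v, δ u l = some v → P v = P u * φ (mk [l]))
    (hJ : ∀ u x m y w, δ u x = some m → δ m y = some w → x.1 ≠ y.1 → P m = 1)
    {L₁ L₂ : List (α × Bool)} {x y : α × Bool} (hxy : x.1 ≠ y.1) {u v : V}
    (h : readWord δ (L₁ ++ x :: y :: L₂ ++ (L₁ ++ x :: y :: L₂)) u = some v) :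
    φ (mk (L₁ ++ x :: y :: L₂)) = 1 := by
  -- between the junctions after the two copies of `x` the path spells a rotation of the word
  simp only [List.append_assoc, List.cons_append, readWord_append_eq_some,
    readWord_cons_eq_some] at h
  obtain ⟨m₀, -, m₁, hx₁, m₂, hy₁, m₃, h₂₃, m₄, h₃₄, m₅, hx₂, m₆, hy₂, -⟩ := h
  have hrot : readWord δ (y :: (L₂ ++ (L₁ ++ [x]))) m₁ = some m₅ := by
    simp only [readWord_append_eq_some, readWord_cons_eq_some]
    exact ⟨m₂, hy₁, m₃, h₂₃, m₄, h₃₄, m₅, hx₂, rfl⟩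
  have key := readWord_potential φ P hP hrot
  rw [hJ _ _ _ _ _ hx₁ hy₁ hxy, hJ _ _ _ _ _ hx₂ hy₂ hxy, one_mul, eq_comm] at key
  rw [show y :: (L₂ ++ (L₁ ++ [x])) = (y :: L₂) ++ (L₁ ++ [x]) by simp, ← mul_mk,
    _root_.map_mul] at key
  rw [show L₁ ++ x :: y :: L₂ = (L₁ ++ [x]) ++ (y :: L₂) by simp, ← mul_mk, _root_.map_mul]
  exact mul_eq_one_comm.1 key

variable [DecidableEq α]

def loopSubgroup (hδ : IsSymmetric δ) (v₀ : V) : Subgroup (FreeGroup α) where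
  carrier := {g | readWord δ g.toWord v₀ = some v₀}
  one_mem' := rfl
  mul_mem' {g h} hg hh := by
    show readWord δ (g * h).toWord v₀ = some v₀
    rw [toWord_mul]
    exact hδ.readWord_of_red reduce.red ((readWord_append_eq_some δ).2 ⟨v₀, hg, hh⟩)
  inv_mem' {g} hg := by
    show readWord δ g⁻¹.toWord v₀ = some v₀
    rw [toWord_inv]
    exact hδ.readWord_invRev hg

theorem mk_mem_loopSubgroup (hδ : IsSymmetric δ) {v₀ : V} {w : List (α × Bool)}
    (h : readWord δ w v₀ = some v₀) : mk w ∈ loopSubgroup hδ v₀ := by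
  show readWord δ (mk w).toWord v₀ = some v₀
  rw [toWord_mk]
  exact hδ.readWord_of_red reduce.red h

def ofEdges [DecidableEq V] (E : List (V × α × V)) : V → α × Bool → Option V
  | u, (x, true) => (E.find? fun e => e.1 = u ∧ e.2.1 = x).map (·.2.2)
  | u, (x, false) => (E.find? fun e => e.2.2 = u ∧ e.2.1 = x).map (·.1)

end LabelledGraph

section CyclicReduction

open reduceCyclically

variable {α : Type*} [DecidableEq α]

theorem eq_conj_mk_reduceCyclically (g : FreeGroup α) :
    g = mk (conjugator g.toWord) * mk (reduceCyclically g.toWord) *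
      (mk (conjugator g.toWord))⁻¹ := by
  rw [inv_mk, mul_mk, mul_mk, conj_conjugator_reduceCyclically, mk_toWord]

theorem reduceCyclically_toWord_ne_nil {g : FreeGroup α} (hg : g ≠ 1) :
    reduceCyclically g.toWord ≠ [] := by
  intro h
  rw [eq_conj_mk_reduceCyclically g, h, ← one_eq_mk, mul_one, mul_inv_cancel] at hg
  exact hg rfl

theorem IsSymmetric.exists_readWord_pow_eq_self {V : Type*} {δ : V → α × Bool → Option V}
    (hδ : IsSymmetric δ) {v₀ : V} {g : FreeGroup α} {n : ℕ} (hn : n ≠ 0)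
    (h : g ^ n ∈ loopSubgroup hδ v₀) :
    ∃ y, readWord δ (List.replicate n (reduceCyclically g.toWord)).flatten y = some y := by
  have hw : readWord δ (g ^ n).toWord v₀ = some v₀ := h
  rw [toWord_pow, reduce_flatten_replicate isReduced_toWord, if_neg hn] at hw
  exact hδ.exists_readWord_eq_self_of_conj hw

end CyclicReduction

section Parity

variable {α : Type*} [DecidableEq α]

def parity : FreeGroup α →* Multiplicative (α → ZMod 2) :=
  lift fun x => .ofAdd (Pi.single x 1)

theorem parity_mk_singleton (l : α × Bool) : parity (mk [l]) = .ofAdd (Pi.single l.1 1) := by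
  obtain ⟨x, _ | _⟩ := l
  · simp [parity, lift_mk, ← ofAdd_neg, ← Pi.single_neg, ZMod.neg_eq_self_mod_two]
  · simp [parity, lift_mk]

theorem parity_ne_one_of_isFreeBasis {v : Fin 2 → FreeGroup (Fin 2)} (hv : IsFreeBasis v) :
    parity (v 0) ≠ 1 := by
  intro h0
  set m := parity (v 1)
  have hmem (g : FreeGroup (Fin 2)) : parity (lift v g) ∈ Subgroup.zpowers m := by
    rw [← MonoidHom.comp_apply, lift_unique (parity.comp (lift v)) (f := parity ∘ v) (by simp)]
    refine range_lift_le ?_ ⟨g, rfl⟩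
    rintro _ ⟨i, rfl⟩
    fin_cases i
    · simp [h0]
    · exact Subgroup.mem_zpowers m
  obtain ⟨g₀, hg₀⟩ := hv.2 (of 0)
  obtain ⟨g₁, hg₁⟩ := hv.2 (of 1)
  obtain ⟨k, hk⟩ := Subgroup.mem_zpowers_iff.1 (hmem g₀)
  obtain ⟨j, hj⟩ := Subgroup.mem_zpowers_iff.1 (hmem g₁)
  rw [hg₀] at hk
  rw [hg₁] at hj
  -- over `𝔽₂`, the vectors `e₀` and `e₁` cannot both be multiples of `m`
  have coord (n : ℤ) (x i : Fin 2) (h : m ^ n = parity (of x)) :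
      (n : ZMod 2) * Multiplicative.toAdd m i = (Pi.single x 1 : Fin 2 → ZMod 2) i := by
    simpa [parity, ← zsmul_eq_mul] using congrFun (congrArg Multiplicative.toAdd h) i
  have := coord k 0 0 hk
  have := coord k 0 1 hk
  have := coord j 1 0 hj
  have := coord j 1 1 hj
  generalize (k : ZMod 2) = k', (j : ZMod 2) = j', Multiplicative.toAdd m 0 = m₀,
    Multiplicative.toAdd m 1 = m₁ at *
  revert k' j' m₀ m₁
  decide

theorem inf_closure_of_eq_closure_of_sq {K : Subgroup (FreeGroup α)}
    (hK : K ≤ parity.ker) {x : α} (hx : of x ^ 2 ∈ K) :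
    K ⊓ Subgroup.closure {of x} = Subgroup.closure {of x ^ 2} := by
  refine le_antisymm ?_ ?_
  · intro g hg
    obtain ⟨hgK, hgx⟩ := Subgroup.mem_inf.1 hg
    obtain ⟨k, rfl⟩ := Subgroup.mem_closure_singleton.1 hgx
    have h := hK hgK
    rw [MonoidHom.mem_ker, map_zpow, parity, lift_apply_of] at h
    have h2 := congrFun (congrArg Multiplicative.toAdd h) x
    simp only [toAdd_zpow, toAdd_ofAdd, Pi.smul_apply, Pi.single_eq_same, zsmul_eq_mul, mul_one,
      toAdd_one, Pi.zero_apply] at h2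
    obtain ⟨j, rfl⟩ := (ZMod.intCast_zmod_eq_zero_iff_dvd k 2).1 h2
    exact Subgroup.mem_closure_singleton.2 ⟨j, by rw [zpow_mul, zpow_natCast]⟩
  · rw [Subgroup.closure_le, Set.singleton_subset_iff]
    exact ⟨hx, pow_mem (Subgroup.mem_closure_singleton.2 ⟨1, zpow_one _⟩) 2⟩

end Parity

section Substitution

variable {α β : Type*}

instance [DecidableEq β] (L : List (β × Bool)) : Decidable (IsReduced L) :=
  inferInstanceAs (Decidable (L.IsChain _))

def substLetter (W : α → List (β × Bool)) (l : α × Bool) : List (β × Bool) :=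
  if l.2 then W l.1 else invRev (W l.1)

variable {W : α → List (β × Bool)}

theorem lift_mk_mk (w : List (α × Bool)) :
    lift (fun x => mk (W x)) (mk w) = mk (w.flatMap (substLetter W)) := by
  induction w with
  | nil => simp [← one_eq_mk]
  | cons l w ih =>
    rw [show mk (l :: w) = mk [l] * mk w by rw [mul_mk, List.singleton_append],
      _root_.map_mul, ih, List.flatMap_cons, ← mul_mk]
    congr 1
    obtain ⟨x, _ | _⟩ := l <;> simp [substLetter, inv_mk]

theorem IsReduced.flatMap_substLetter
    (hW : ∀ l l', IsReduced [l, l'] → IsReduced (substLetter W l ++ substLetter W l'))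
    (hne : ∀ x, W x ≠ []) {w : List (α × Bool)} (hw : IsReduced w) :
    IsReduced (w.flatMap (substLetter W)) := by
  induction w with
  | nil => exact IsReduced.nil
  | cons l w ih =>
    rcases w with _ | ⟨l', w⟩
    · rw [List.flatMap_singleton]
      exact (hW l l (isReduced_cons_cons.2 ⟨fun _ => rfl, .singleton⟩)).infix ⟨[], _, rfl⟩
    · rw [List.flatMap_cons, List.flatMap_cons, ← List.append_assoc]
      have ih := ih (hw.infix ⟨[l], [], by simp⟩)
      rw [List.flatMap_cons] at ih
      refine .append_overlap (hW l l' (hw.infix ⟨[], w, by simp⟩)) ih ?_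
      obtain ⟨x, _ | _⟩ := l' <;> simp [substLetter, invRev, hne]

theorem lift_mk_injective [DecidableEq α] [DecidableEq β]
    (hW : ∀ l l', IsReduced [l, l'] → IsReduced (substLetter W l ++ substLetter W l'))
    (hne : ∀ x, W x ≠ []) : Function.Injective (lift fun x => mk (W x)) := by
  rw [injective_iff_map_eq_one]
  intro g hg
  have hred := IsReduced.flatMap_substLetter hW hne (isReduced_toWord (x := g))
  rw [← mk_toWord (x := g), lift_mk_mk] at hg
  have hnil : g.toWord.flatMap (substLetter W) = [] := by
    rw [← hred.reduce_eq, ← toWord_mk, hg, toWord_one]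
  rw [← toWord_eq_nil_iff, List.eq_nil_iff_forall_not_mem]
  intro l hl
  obtain ⟨x, _ | _⟩ := l <;>
    simpa [substLetter, invRev, hne] using List.flatMap_eq_nil_iff.1 hnil _ hl

end Substitution

end FreeGroup

section Rank

open Subgroup

variable {G : Type} [Group G]

theorem hasRank_bot : HasRank (⊥ : Subgroup G) 0 := ⟨MulEquiv.ofUnique⟩

theorem HasRank.eq_zero_of_bot {r : ℕ} (h : HasRank (⊥ : Subgroup G) r) : r = 0 := by
  obtain ⟨e⟩ := h
  by_contra hr
  exact FreeGroup.of_ne_one (⟨0, Nat.pos_of_ne_zero hr⟩ : Fin r)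
    (e.injective (Subsingleton.elim _ _))

theorem HasRank.isCyclic {S : Subgroup G} {r : ℕ} (h : HasRank S r) (hr : r ≤ 1) : IsCyclic S := by
  obtain ⟨e⟩ := h
  interval_cases r
  · exact isCyclic_of_surjective e.toMonoidHom e.surjective
  · exact isCyclic_of_surjective e.toMonoidHom e.surjective

theorem hasRank_closure_singleton [IsMulTorsionFree G] {g : G} (hg : g ≠ 1) :
    HasRank (closure {g}) 1 := by
  rw [← zpowers_eq_closure]
  have : Infinite (zpowers g) :=
    (infinite_zpowers.2 (by rwa [isOfFinOrder_iff_eq_one])).to_subtype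
  exact ⟨FreeGroup.mulEquivIntOfUnique.trans intCyclicMulEquiv⟩

theorem hasRank_closure_pair {x y : G} (h : Function.Injective (FreeGroup.lift ![x, y])) :
    HasRank (closure {x, y}) 2 :=
  ⟨(MonoidHom.ofInjective h).trans (MulEquiv.subgroupCongr (by
    rw [FreeGroup.range_lift_eq_closure, Matrix.range_cons_cons_empty]))⟩

theorem isFreeBasis_of_equiv {ι α : Type} (e : ι ≃ α) :
    IsFreeBasis fun i => FreeGroup.of (e i) := by
  have : FreeGroup.lift (fun i => FreeGroup.of (e i)) = (FreeGroup.freeGroupCongr e).toMonoidHom :=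
    FreeGroup.ext_hom _ _ fun i => by simp [FreeGroup.freeGroupCongr]
  rw [IsFreeBasis, this]
  exact (FreeGroup.freeGroupCongr e).bijective

theorem prefixSubgroup_zero {n : ℕ} (v : Fin n → G) : prefixSubgroup v 0 = ⊥ := by
  simp [prefixSubgroup]

theorem prefixSubgroup_one {n : ℕ} (v : Fin (n + 1) → G) : prefixSubgroup v 1 = closure {v 0} := by
  have : {j : Fin (n + 1) | (j : ℕ) < 1} = {0} := by
    ext j
    rw [Set.mem_singleton_iff, Fin.ext_iff]
    exact Nat.lt_one_iff
  rw [prefixSubgroup, this, Set.image_singleton]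

theorem IsFreeBasis.prefixSubgroup_eq_top {n : ℕ} {v : Fin n → G} (hv : IsFreeBasis v) :
    prefixSubgroup v n = ⊤ := by
  rw [prefixSubgroup, show {j : Fin n | (j : ℕ) < n} = Set.univ by ext j; simp,
    Set.image_univ, ← FreeGroup.range_lift_eq_closure]
  exact MonoidHom.range_eq_top.2 hv.2

theorem isEchelonBasis_of_fin_two {v : Fin 2 → G} (hv : IsFreeBasis v) {K : Subgroup G}
    {r₁ r₂ : ℕ} (h₁ : HasRank (K ⊓ closure {v 0}) r₁) (hr₁ : r₁ ≤ 1) (h₂ : HasRank K r₂)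
    (hr₂ : r₂ ≤ r₁ + 1) : IsEchelonBasis v K := by
  refine ⟨hv, fun i => ?_⟩
  fin_cases i
  · refine ⟨r₁, 0, ?_, ?_, hr₁⟩
    · simpa [prefixSubgroup_zero] using hasRank_bot
    · simpa [prefixSubgroup_one] using h₁
  · refine ⟨r₂, r₁, ?_, ?_, hr₂⟩
    · simpa [prefixSubgroup_one] using h₁
    · simpa [hv.prefixSubgroup_eq_top] using h₂

theorem IsEchelon.exists_fin_two {K : Subgroup (FreeGroup (Fin 2))} (hK : IsEchelon K) :
    ∃ v : Fin 2 → FreeGroup (Fin 2), IsFreeBasis v ∧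
      ∃ r₁ r₂ : ℕ, HasRank (K ⊓ closure {v 0}) r₁ ∧ HasRank K r₂ ∧ r₂ ≤ r₁ + 1 := by
  obtain ⟨m, v, hv, hranks⟩ := hK
  obtain rfl : m = 2 := by
    simpa using Fintype.card_congr (Equiv.ofFreeGroupEquiv (MulEquiv.ofBijective _ hv))
  obtain ⟨r₂, r₁, h₁, h₂, hr⟩ := hranks 1
  refine ⟨v, hv, r₁, r₂, ?_, ?_, hr⟩
  · simpa [prefixSubgroup_one] using h₁
  · simpa [hv.prefixSubgroup_eq_top] using h₂

end Rank

namespace EchelonIntersection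

open FreeGroup Subgroup

abbrev H : Subgroup (FreeGroup (Fin 2)) := closure {a ^ 2, b ^ 2 * a ^ 2 * b ^ 2}

abbrev H' : Subgroup (FreeGroup (Fin 2)) := closure {b ^ 2, a ^ 2 * b ^ 2 * a ^ 2}

/-- The Stallings graph of `H`: an `a²`-loop `0 → 1 → 0` and the cycle
`0 -b²→ 3 -a²→ 5 -b²→ 0`; `graphH'` is the same graph with `a` and `b` exchanged. -/
def graphH : Fin 7 → Fin 2 × Bool → Option (Fin 7) :=
  ofEdges [(0, 0, 1), (1, 0, 0), (0, 1, 2), (2, 1, 3), (3, 0, 4), (4, 0, 5), (5, 1, 6), (6, 1, 0)]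

def graphH' : Fin 7 → Fin 2 × Bool → Option (Fin 7) :=
  ofEdges [(0, 1, 1), (1, 1, 0), (0, 0, 2), (2, 0, 3), (3, 1, 4), (4, 1, 5), (5, 0, 6), (6, 0, 0)]

theorem isSymmetric_graphH : IsSymmetric graphH := by
  unfold IsSymmetric; decide

theorem isSymmetric_graphH' : IsSymmetric graphH' := by
  unfold IsSymmetric; decide

theorem H_le_loopSubgroup : H ≤ loopSubgroup isSymmetric_graphH 0 := by
  rw [closure_le, Set.insert_subset_iff, Set.singleton_subset_iff]
  exact ⟨mk_mem_loopSubgroup (w := [(0, true), (0, true)]) _ (by decide),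
    mk_mem_loopSubgroup (w := [(1, true), (1, true), (0, true), (0, true), (1, true), (1, true)]) _
      (by decide)⟩

theorem H'_le_loopSubgroup : H' ≤ loopSubgroup isSymmetric_graphH' 0 := by
  rw [closure_le, Set.insert_subset_iff, Set.singleton_subset_iff]
  exact ⟨mk_mem_loopSubgroup (w := [(1, true), (1, true)]) _ (by decide),
    mk_mem_loopSubgroup (w := [(0, true), (0, true), (1, true), (1, true), (0, true), (0, true)]) _
      (by decide)⟩

/-- The parities of the numbers of `a`- and `b`-letters along paths from `0` in `graphH`; it
vanishes at `0`, `3` and `5`, the only vertices where a path can change letter. -/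
def parityPotential : Fin 7 → Multiplicative (Fin 2 → ZMod 2) :=
  ![.ofAdd ![0, 0], .ofAdd ![1, 0], .ofAdd ![0, 1], .ofAdd ![0, 0], .ofAdd ![1, 0],
    .ofAdd ![0, 0], .ofAdd ![0, 1]]

theorem parityPotential_step :
    ∀ u l v, graphH u l = some v → parityPotential v = parityPotential u * parity (mk [l]) := by
  simp only [parity_mk_singleton]
  decide

set_option synthInstance.maxSize 1000 in
theorem parityPotential_junction : ∀ u x m y w, graphH u x = some m → graphH m y = some w →
    x.1 ≠ y.1 → parityPotential m = 1 := by
  decide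

/-- Increases along the `b`-path `5 → 6 → 0 → 2 → 3` of `graphH`, the `a`-path of `graphH'`. -/
def height : Fin 7 → ℕ := ![2, 0, 3, 4, 0, 0, 1]

theorem height_lt_graphH : ∀ u v, graphH u (1, true) = some v → height u < height v := by decide

theorem height_lt_graphH' : ∀ u v, graphH' u (0, true) = some v → height u < height v := by decide

open reduceCyclically in
theorem not_isChain_eq_reduceCyclically {g : FreeGroup (Fin 2)} (hg : g ≠ 1) {n : ℕ} (hn : n ≠ 0)
    (hmem : g ^ n ∈ H ⊓ H') : ¬ (reduceCyclically g.toWord).IsChain (· = ·) := by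
  intro hchain
  obtain ⟨y, hy⟩ := isSymmetric_graphH.exists_readWord_pow_eq_self hn (H_le_loopSubgroup hmem.1)
  obtain ⟨y', hy'⟩ := isSymmetric_graphH'.exists_readWord_pow_eq_self hn (H'_le_loopSubgroup hmem.2)
  obtain ⟨x, t, hxt⟩ := List.exists_cons_of_ne_nil (reduceCyclically_toWord_ne_nil hg)
  have hrep := List.isChain_eq_iff_eq_replicate.1 hchain x (by simp [hxt])
  have hk : n * (reduceCyclically g.toWord).length ≠ 0 := by simp [hxt, hn]
  rw [hrep, List.flatten_replicate_replicate] at hy hy'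
  obtain ⟨c, s⟩ := x
  fin_cases c
  · exact isSymmetric_graphH'.readWord_replicate_ne_self height height_lt_graphH' hk s y' hy'
  · exact isSymmetric_graphH.readWord_replicate_ne_self height height_lt_graphH hk s y hy

open reduceCyclically in
theorem parity_eq_one_of_pow_mem {g : FreeGroup (Fin 2)} {n : ℕ} (hn : 2 ≤ n) (hmem : g ^ n ∈ H)
    (hmixed : ¬ (reduceCyclically g.toWord).IsChain (· = ·)) : parity g = 1 := by
  obtain ⟨y, hy⟩ :=
    isSymmetric_graphH.exists_readWord_pow_eq_self (by omega) (H_le_loopSubgroup hmem)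
  simp only [List.isChain_iff_forall_rel_of_append_cons_cons, not_forall] at hmixed
  obtain ⟨x, z, L₁, L₂, hR, hxz⟩ := hmixed
  have hred := (isCyclicallyReduced (isReduced_toWord (x := g))).isReduced
  have hxz₁ : x.1 ≠ z.1 := fun h =>
    hxz (Prod.ext h (List.isChain_iff_forall_rel_of_append_cons_cons.1 hred hR h))
  obtain ⟨k, rfl⟩ : ∃ k, n = k + 2 := ⟨n - 2, by omega⟩
  rw [List.replicate_succ, List.replicate_succ, List.flatten_cons, List.flatten_cons,
    ← List.append_assoc, readWord_append_eq_some, hR] at hy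
  obtain ⟨v, hv, -⟩ := hy
  have hRone := map_mk_eq_one_of_junctions parity parityPotential parityPotential_step
    parityPotential_junction hxz₁ hv
  rw [eq_conj_mk_reduceCyclically g, _root_.map_mul, _root_.map_mul, hR, hRone, mul_one,
    _root_.map_inv, mul_inv_cancel]

theorem pow_notMem_of_isFreeBasis {v : Fin 2 → FreeGroup (Fin 2)} (hv : IsFreeBasis v) {n : ℕ}
    (hn : 2 ≤ n) : v 0 ^ n ∉ H ⊓ H' := by
  intro hmem
  have hparity := parity_ne_one_of_isFreeBasis hv
  have hne : v 0 ≠ 1 := fun h => hparity (by rw [h, _root_.map_one])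
  exact hparity (parity_eq_one_of_pow_mem hn hmem.1
    (not_isChain_eq_reduceCyclically hne (by omega) hmem))

theorem inf_closure_eq_bot_of_isFreeBasis {v : Fin 2 → FreeGroup (Fin 2)} (hv : IsFreeBasis v) :
    H ⊓ H' ⊓ closure {v 0} = ⊥ := by
  refine (eq_bot_iff_forall _).2 fun g hmem => ?_
  obtain ⟨hg, hgv⟩ := mem_inf.1 hmem
  obtain ⟨k, rfl⟩ := mem_closure_singleton.1 hgv
  by_contra hk1
  have hk : k ≠ 0 := by rintro rfl; exact hk1 (zpow_zero _)
  refine pow_notMem_of_isFreeBasis hv (n := 2 * k.natAbs) (by omega) ?_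
  have : v 0 ^ (2 * k.natAbs) = (v 0 ^ k) ^ (2 * k.sign) := by
    rw [← zpow_natCast, ← zpow_mul, Nat.cast_mul, Int.natCast_natAbs, ← Int.sign_mul_self_eq_abs]
    ring_nf
  rw [this]
  exact zpow_mem hg _

theorem H_le_ker_parity : H ≤ parity.ker := by
  rw [closure_le, Set.insert_subset_iff, Set.singleton_subset_iff]
  simp only [SetLike.mem_coe, MonoidHom.mem_ker]
  unfold a b
  decide

theorem H'_le_ker_parity : H' ≤ parity.ker := by
  rw [closure_le, Set.insert_subset_iff, Set.singleton_subset_iff]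
  simp only [SetLike.mem_coe, MonoidHom.mem_ker]
  unfold a b
  decide

theorem hasRank_H : HasRank H 2 := by
  refine hasRank_closure_pair ?_
  have : ![a ^ 2, b ^ 2 * a ^ 2 * b ^ 2] = fun x => mk (![[(0, true), (0, true)],
      [(1, true), (1, true), (0, true), (0, true), (1, true), (1, true)]] x) := by
    funext i; fin_cases i <;> rfl
  rw [this]
  exact lift_mk_injective (by decide) (by decide)

theorem hasRank_H' : HasRank H' 2 := by
  refine hasRank_closure_pair ?_
  have : ![b ^ 2, a ^ 2 * b ^ 2 * a ^ 2] = fun x => mk (![[(1, true), (1, true)],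
      [(0, true), (0, true), (1, true), (1, true), (0, true), (0, true)]] x) := by
    funext i; fin_cases i <;> rfl
  rw [this]
  exact lift_mk_injective (by decide) (by decide)

theorem isEchelon_H : IsEchelon H := by
  have hv : IsFreeBasis ![a, b] := by
    convert isFreeBasis_of_equiv (Equiv.refl (Fin 2)) using 1
    funext i; fin_cases i <;> rfl
  refine ⟨2, _, isEchelonBasis_of_fin_two hv ?_ le_rfl hasRank_H le_rfl⟩
  rw [show ![a, b] 0 = of 0 from rfl, inf_closure_of_eq_closure_of_sq H_le_ker_parity
    (subset_closure (Set.mem_insert _ _))]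
  exact hasRank_closure_singleton (by decide)

theorem isEchelon_H' : IsEchelon H' := by
  have hv : IsFreeBasis ![b, a] := by
    convert isFreeBasis_of_equiv (Equiv.swap (0 : Fin 2) 1) using 1
    funext i; fin_cases i <;> rfl
  refine ⟨2, _, isEchelonBasis_of_fin_two hv ?_ le_rfl hasRank_H' le_rfl⟩
  rw [show ![b, a] 0 = of 1 from rfl, inf_closure_of_eq_closure_of_sq H'_le_ker_parity
    (subset_closure (Set.mem_insert _ _))]
  exact hasRank_closure_singleton (by decide)

theorem not_isEchelon_inf : ¬ IsEchelon (H ⊓ H') := by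
  intro hK
  obtain ⟨v, hv, r₁, r₂, h₁, h₂, hr⟩ := hK.exists_fin_two
  rw [inf_closure_eq_bot_of_isFreeBasis hv] at h₁
  obtain rfl := h₁.eq_zero_of_bot
  let := (h₂.isCyclic hr).commGroup
  have ha : a ^ 2 ∈ H := subset_closure (by simp)
  have hbab : b ^ 2 * a ^ 2 * b ^ 2 ∈ H := subset_closure (by simp)
  have hb : b ^ 2 ∈ H' := subset_closure (by simp)
  have haba : a ^ 2 * b ^ 2 * a ^ 2 ∈ H' := subset_closure (by simp)
  have hx : a ^ 2 * b ^ 2 * a ^ 2 * b ^ 2 ∈ H ⊓ H' :=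
    mem_inf.2 ⟨by simpa only [mul_assoc] using mul_mem ha hbab, mul_mem haba hb⟩
  have hy : b ^ 2 * a ^ 2 * b ^ 2 * a ^ 2 ∈ H ⊓ H' :=
    mem_inf.2 ⟨mul_mem hbab ha, by simpa only [mul_assoc] using mul_mem hb haba⟩
  have hne : (a ^ 2 * b ^ 2 * a ^ 2 * b ^ 2) * (b ^ 2 * a ^ 2 * b ^ 2 * a ^ 2) ≠
      (b ^ 2 * a ^ 2 * b ^ 2 * a ^ 2) * (a ^ 2 * b ^ 2 * a ^ 2 * b ^ 2) := by
    unfold a b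
    decide
  exact hne (congrArg Subtype.val (mul_comm (⟨_, hx⟩ : ↥(H ⊓ H')) ⟨_, hy⟩))

end EchelonIntersection

theorem statement14 :
    IsEchelon (Subgroup.closure {a ^ 2, b ^ 2 * a ^ 2 * b ^ 2}) ∧
    IsEchelon (Subgroup.closure {b ^ 2, a ^ 2 * b ^ 2 * a ^ 2}) ∧
    ¬ IsEchelon (Subgroup.closure {a ^ 2, b ^ 2 * a ^ 2 * b ^ 2} ⊓
        Subgroup.closure {b ^ 2, a ^ 2 * b ^ 2 * a ^ 2}) :=
  ⟨EchelonIntersection.isEchelon_H, EchelonIntersection.isEchelon_H',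
    EchelonIntersection.not_isEchelon_inf⟩
end

section
/- Let F_2 = ⟨a,b⟩ and K = ⟨a²b²a²b², b²a²b²a²⟩. Then K contains no nontrivial power of any primitive element of F_2; consequently, for every primitive element p of F_2 one has K ∩ ⟨p⟩ = {1}. -/
/-- An element is primitive if it belongs to some basis of the free group. -/
def IsPrimitive {n : ℕ} (p : FreeGroup (Fin n)) : Prop :=
  ∃ c : Fin n → FreeGroup (Fin n), IsFreeBasis c ∧ ∃ i, c i = p

noncomputable def K : Subgroup (FreeGroup (Fin 2)) :=
  Subgroup.closure {a ^ 2 * b ^ 2 * a ^ 2 * b ^ 2, b ^ 2 * a ^ 2 * b ^ 2 * a ^ 2}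

/-!
The homomorphisms `a ↦ s, b ↦ t` onto the infinite dihedral group `⟨s, t | s², t²⟩` and
`a ↦ 1, b ↦ -1` onto `ℤ` both kill `K`, whose generators are products of `a²` and `b²` with
each occurring equally often. If `p ^ m ∈ K` with `m ≠ 0`, torsion-freeness of `ℤ` makes the
exponent sum of `p` even, so `p` maps to a rotation of finite order, i.e. to `1`. A primitive
`p` in the kernel of a homomorphism makes its image cyclic, generated by the image of the
complementary basis element; but `s` and `t` do not commute.
-/

namespace DihedralGroup

def sign {n : ℕ} : DihedralGroup n →* ℤˣ where
  toFun
    | r _ => 1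
    | sr _ => -1
  map_one' := rfl
  map_mul' := by rintro (i | i) (j | j) <;> simp [r_mul_r, r_mul_sr, sr_mul_r, sr_mul_sr]

theorem eq_one_of_sign_eq_one_of_zpow_eq_one {g : DihedralGroup 0} {m : ℤ} (hm : m ≠ 0)
    (hsign : sign g = 1) (hg : g ^ m = 1) : g = 1 := by
  rcases g with i | i
  · rw [r_zpow, one_def, r.injEq] at hg
    rw [one_def, mul_eq_zero.mp hg |>.resolve_right (by exact_mod_cast hm)]
  · exact absurd hsign (by rw [show sign (sr i) = -1 from rfl]; decide)

end DihedralGroup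

theorem Subgroup.inf_zpowers_eq_bot {G : Type*} [Group G] {H : Subgroup G} {g : G}
    (h : ∀ m : ℤ, m ≠ 0 → g ^ m ∉ H) : H ⊓ Subgroup.zpowers g = ⊥ := by
  rw [Subgroup.eq_bot_iff_forall]
  rintro _ ⟨hH, m, rfl⟩
  by_cases hm : m = 0
  · simp [hm]
  · exact absurd hH (h m hm)

theorem IsPrimitive.commute_of_map_eq_one {G : Type*} [Group G] {p : FreeGroup (Fin 2)}
    (hp : IsPrimitive p) {f : FreeGroup (Fin 2) →* G} (hf : f p = 1) (x y : FreeGroup (Fin 2)) :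
    Commute (f x) (f y) := by
  obtain ⟨c, hc, i, rfl⟩ := hp
  have hrange : f.range ≤ Subgroup.zpowers (f (c (i + 1))) := by
    rw [MonoidHom.range_eq_map, ← MonoidHom.range_eq_top.mpr hc.2, FreeGroup.range_lift_eq_closure,
      MonoidHom.map_closure, Subgroup.closure_le]
    rintro _ ⟨_, ⟨k, rfl⟩, rfl⟩
    rcases (by decide : ∀ i k : Fin 2, k = i ∨ k = i + 1) i k with rfl | rfl
    · simp [hf]
    · exact Subgroup.mem_zpowers _
  obtain ⟨k, hk⟩ := hrange ⟨x, rfl⟩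
  obtain ⟨l, hl⟩ := hrange ⟨y, rfl⟩
  rw [← hk, ← hl]
  exact Commute.zpow_zpow_self _ k l

open DihedralGroup

noncomputable def toDihedral : FreeGroup (Fin 2) →* DihedralGroup 0 :=
  FreeGroup.lift ![sr 0, sr 1]

noncomputable def expSumDiff : FreeGroup (Fin 2) →* Multiplicative ℤ :=
  FreeGroup.lift ![Multiplicative.ofAdd 1, Multiplicative.ofAdd (-1)]

@[simp] lemma toDihedral_a : toDihedral a = sr 0 := FreeGroup.lift_apply_of
@[simp] lemma toDihedral_b : toDihedral b = sr 1 := FreeGroup.lift_apply_of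
@[simp] lemma expSumDiff_a : expSumDiff a = Multiplicative.ofAdd 1 := FreeGroup.lift_apply_of
@[simp] lemma expSumDiff_b : expSumDiff b = Multiplicative.ofAdd (-1) := FreeGroup.lift_apply_of

lemma K_le_ker_toDihedral : K ≤ toDihedral.ker := by
  rw [K, Subgroup.closure_le]
  rintro _ (rfl | rfl) <;> simp [pow_two]

lemma K_le_ker_expSumDiff : K ≤ expSumDiff.ker := by
  rw [K, Subgroup.closure_le]
  rintro _ (rfl | rfl) <;> simp [← ofAdd_nsmul]

lemma sign_toDihedral (w : FreeGroup (Fin 2)) :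
    sign (toDihedral w) = zpowersHom ℤˣ (-1) (expSumDiff w) := by
  have : sign.comp toDihedral = (zpowersHom ℤˣ (-1)).comp expSumDiff :=
    FreeGroup.ext_hom _ _ fun i => by fin_cases i <;> rfl
  exact DFunLike.congr_fun this w

lemma not_commute_toDihedral_a_b : ¬Commute (toDihedral a) (toDihedral b) := by
  simp [Commute, SemiconjBy, sr_mul_sr]

theorem IsPrimitive.zpow_notMem_K {p : FreeGroup (Fin 2)} (hp : IsPrimitive p) {m : ℤ}
    (hm : m ≠ 0) : p ^ m ∉ K := by
  intro hK
  have hexp : expSumDiff p = 1 :=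
    (IsMulTorsionFree.zpow_eq_one_iff_left hm).mp (by simpa using K_le_ker_expSumDiff hK)
  have hdih : toDihedral p = 1 :=
    eq_one_of_sign_eq_one_of_zpow_eq_one hm (by rw [sign_toDihedral, hexp, map_one])
      (by simpa using K_le_ker_toDihedral hK)
  exact not_commute_toDihedral_a_b (hp.commute_of_map_eq_one hdih a b)

theorem statement15 (p : FreeGroup (Fin 2)) (hp : IsPrimitive p) :
    (∀ m : ℤ, m ≠ 0 → p ^ m ∉ K) ∧ K ⊓ Subgroup.closure {p} = ⊥ := by
  have hpow : ∀ m : ℤ, m ≠ 0 → p ^ m ∉ K := fun _ hm => hp.zpow_notMem_K hm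
  rw [← Subgroup.zpowers_eq_closure]
  exact ⟨hpow, Subgroup.inf_zpowers_eq_bot hpow⟩
end
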